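/- arXiv:2412.04605 — 2 statements merged into one kernel-verified Lean document; each statement's English description precedes it below -/
import Mathlib

section
/- Under no anticipation, conditional parallel trends, and overlap, the average treatment effect on the treated τ₀ = E[Y₂(1) − Y₂(0) | D = 1] is identified as τ₀ = E[D(ΔY − m₀(X))] / E[D], where ΔY = Y₂ − Y₁ and m₀(x) = E[ΔY | D = 0, X = x]. -/
open MeasureTheory

/-!
Since `Y₁ = Y₁(0)` and `D² = D`, `D (ΔY − m₀(X)) = D (Y₂(1) − Y₂(0)) + D (Y₂(0) − Y₁(0) − m₀(X))`,
so it suffices that `E[D (Y₂(0) − Y₁(0))] = E[D m₀(X)]`. Pulling `D` out of the conditional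
expectation given `(D, X)`, the left side is `E[D g(X)]`, where `g(X)` is that conditional
expectation by parallel trends. On the controls `ΔY = Y₂(0) − Y₁(0)`, so `g(X) = m₀(X)` on
`{D = 0}`; conditioning `(g − m₀)(X) (1 − D) = 0` on `X` gives `(g − m₀)(X) E[1 − D | X] = 0`,
and overlap makes `E[1 − D | X] ≥ ε > 0`, hence `g(X) = m₀(X)` almost surely.
-/

namespace MeasureTheory

variable {Ω : Type*} {m m0 : MeasurableSpace Ω} {μ : Measure Ω}

theorem condExp_ae_eq_restrict_of_ae_eq_restrict {s : Set Ω} {f f' : Ω → ℝ}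
    (hs : MeasurableSet[m] s) (hf : Integrable f μ) (hf' : Integrable f' μ)
    (hff' : f =ᵐ[μ.restrict s] f') : μ[f|m] =ᵐ[μ.restrict s] μ[f'|m] := by
  have hsub : μ[f - f'|m] =ᵐ[μ.restrict s] 0 :=
    condExp_ae_eq_restrict_zero hs (hff'.mono fun ω h => sub_eq_zero.mpr h)
  filter_upwards [ae_restrict_of_ae (condExp_sub hf hf' m), hsub] with ω hω hω0
  exact sub_eq_zero.mp (hω.symm.trans hω0)

theorem condExp_ae_eq_of_ae_eq_on (hm : m ≤ m0) {s : Set Ω} {f f' : Ω → ℝ}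
    (hs : MeasurableSet[m] s) (hf : Integrable f μ) (hf' : Integrable f' μ)
    (hff' : ∀ᵐ ω ∂μ, ω ∈ s → f ω = f' ω) : ∀ᵐ ω ∂μ, ω ∈ s → μ[f|m] ω = μ[f'|m] ω :=
  (ae_restrict_iff' (hm _ hs)).mp <|
    condExp_ae_eq_restrict_of_ae_eq_restrict hs hf hf' ((ae_restrict_iff' (hm _ hs)).mpr hff')

theorem ae_eq_zero_of_mul_ae_eq_zero_of_condExp_ne_zero {h w : Ω → ℝ}
    (hh : AEStronglyMeasurable[m] h μ) (hw : Integrable w μ) (hhw : h * w =ᵐ[μ] 0)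
    (hcw : ∀ᵐ ω ∂μ, μ[w|m] ω ≠ 0) : h =ᵐ[μ] 0 := by
  have hpull : μ[h * w|m] =ᵐ[μ] h * μ[w|m] :=
    condExp_mul_of_aestronglyMeasurable_left hh ((integrable_zero _ _ _).congr hhw.symm) hw
  have hzero : μ[h * w|m] =ᵐ[μ] 0 := by
    simpa only [condExp_zero] using condExp_congr_ae (m := m) hhw
  filter_upwards [hpull, hzero, hcw] with ω hpull hzero hcw
  rw [hzero, Pi.mul_apply, Pi.zero_apply, eq_comm, mul_eq_zero] at hpull
  exact hpull.resolve_right hcw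

theorem ae_eq_zero_of_condExp_ne_one (hm : m ≤ m0) [IsFiniteMeasure μ] {h D : Ω → ℝ}
    (hh : AEStronglyMeasurable[m] h μ) (hD : Integrable D μ)
    (hhD : ∀ᵐ ω ∂μ, D ω ≠ 1 → h ω = 0) (hD1 : ∀ᵐ ω ∂μ, μ[D|m] ω ≠ 1) : h =ᵐ[μ] 0 := by
  refine ae_eq_zero_of_mul_ae_eq_zero_of_condExp_ne_zero (w := fun ω => 1 - D ω) hh
    ((integrable_const 1).sub hD) ?_ ?_
  · filter_upwards [hhD] with ω hω
    by_cases h1 : D ω = 1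
    · simp [h1]
    · simp [hω h1]
  · filter_upwards [condExp_sub (integrable_const 1) hD m, hD1] with ω hsub hω
    rw [show (fun ω => 1 - D ω) = (fun _ => (1 : ℝ)) - D from rfl, hsub, Pi.sub_apply,
      condExp_const hm, sub_ne_zero]
    exact hω.symm

theorem integral_mul_sub_eq_zero_of_condExp_ae_eq (hm : m ≤ m0) [SigmaFinite (μ.trim hm)]
    {g f φ : Ω → ℝ} (hg : AEStronglyMeasurable[m] g μ) (hf : Integrable f μ)
    (hgf : Integrable (fun ω => g ω * f ω) μ) (hgφ : Integrable (fun ω => g ω * φ ω) μ)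
    (hfφ : μ[f|m] =ᵐ[μ] φ) : ∫ ω, g ω * (f ω - φ ω) ∂μ = 0 := by
  have hpull : μ[g * f|m] =ᵐ[μ] g * μ[f|m] := condExp_mul_of_aestronglyMeasurable_left hg hgf hf
  simp_rw [mul_sub]
  rw [integral_sub hgf hgφ, sub_eq_zero, ← integral_condExp hm]
  refine integral_congr_ae ?_
  filter_upwards [hpull, hfφ] with ω hpull hfφ
  exact hpull.trans (congrArg (g ω * ·) hfφ)

theorem Integrable.mul_of_zero_or_one {D f : Ω → ℝ} (hD : ∀ ω, D ω = 0 ∨ D ω = 1)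
    (hmD : AEStronglyMeasurable D μ) (hf : Integrable f μ) :
    Integrable (fun ω => D ω * f ω) μ :=
  hf.bdd_mul (c := 1) hmD <| .of_forall fun ω => by rcases hD ω with h | h <;> simp [h]

end MeasureTheory

/-- Identification of the ATT in the canonical difference-in-differences design:
under no anticipation, conditional parallel trends, and overlap,
`τ₀ = E[Y₂(1) − Y₂(0) | D = 1] = E[D(ΔY − m₀(X))] / E[D]`. -/
theorem att_identification
    {Ω 𝓧 : Type*} [MeasurableSpace Ω] [MeasurableSpace 𝓧]
    (μ : Measure Ω) [IsProbabilityMeasure μ]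
    (Y10 Y11 Y20 Y21 D : Ω → ℝ) (X : Ω → 𝓧) (m₀ : 𝓧 → ℝ)
    (hD : ∀ ω, D ω = 0 ∨ D ω = 1)
    (hmD : Measurable D) (hmX : Measurable X) (hmm₀ : Measurable m₀)
    (hInt : Integrable Y10 μ ∧ Integrable Y11 μ ∧ Integrable Y20 μ ∧ Integrable Y21 μ)
    (hIntm : Integrable (fun ω => m₀ (X ω)) μ)
    -- realized outcomes
    (Y1 Y2 : Ω → ℝ)
    (hY1 : ∀ ω, Y1 ω = Y10 ω)
    (hY2 : ∀ ω, Y2 ω = D ω * Y21 ω + (1 - D ω) * Y20 ω)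
    -- σ-algebra generated by (D, X)
    (mDX : MeasurableSpace Ω)
    (hmDX : mDX = MeasurableSpace.comap (fun ω => (D ω, X ω)) inferInstance)
    -- (i) no anticipation
    (hNA : ∀ᵐ ω ∂μ, D ω = 1 → (μ[Y10|mDX]) ω = (μ[Y11|mDX]) ω)
    -- (ii) conditional parallel trends: the conditional expectation of
    -- Y₂(0) − Y₁(0) given (D, X) depends on X only
    (hPT : ∃ g : 𝓧 → ℝ, Measurable g ∧
      μ[fun ω => Y20 ω - Y10 ω|mDX] =ᵐ[μ] fun ω => g (X ω))
    -- (iii) overlap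
    (ε : ℝ) (hε : 0 < ε)
    (hover1 : ε < (μ {ω | D ω = 1}).toReal)
    (hover2 : ∀ᵐ ω ∂μ, (μ[D|MeasurableSpace.comap X inferInstance]) ω ≤ 1 - ε)
    -- m₀ is the conditional mean of ΔY = Y₂ − Y₁ in the control group
    (hm₀ : ∀ᵐ ω ∂μ, D ω = 0 →
      (μ[fun ω' => Y2 ω' - Y1 ω'|mDX]) ω = m₀ (X ω)) :
    (∫ ω, D ω * (Y21 ω - Y20 ω) ∂μ) / (∫ ω, D ω ∂μ)
      = (∫ ω, D ω * (Y2 ω - Y1 ω - m₀ (X ω)) ∂μ) / (∫ ω, D ω ∂μ) := by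
  -- `mDX` is itself a local instance, so the ambient σ-algebra must be named explicitly.
  rename_i mΩ _ _
  obtain ⟨hI10, -, hI20, hI21⟩ := hInt
  obtain ⟨g, hmg, hPT⟩ := hPT
  have hle : mDX ≤ mΩ := hmDX ▸ (hmD.prodMk hmX).comap_le
  have hDmDX : Measurable[mDX] D :=
    measurable_fst.comp (hmDX ▸ comap_measurable _ : Measurable[mDX] fun ω => (D ω, X ω))
  have hDmul {f : Ω → ℝ} (hf : Integrable f μ) : Integrable (fun ω => D ω * f ω) μ :=
    hf.mul_of_zero_or_one hD hmD.aestronglyMeasurable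
  have hIΔ₀ : Integrable (fun ω => Y20 ω - Y10 ω) μ := hI20.sub hI10
  have hΔY (ω : Ω) : Y2 ω - Y1 ω = Y20 ω - Y10 ω + D ω * (Y21 ω - Y20 ω) := by
    rw [hY1, hY2]; ring
  have hIΔY : Integrable (fun ω => Y2 ω - Y1 ω) μ := by
    simp_rw [hΔY]; exact hIΔ₀.add (hDmul (hI21.sub hI20))
  have hcontrol : ∀ᵐ ω ∂μ, D ω ≠ 1 → g (X ω) = m₀ (X ω) := by
    filter_upwards [condExp_ae_eq_of_ae_eq_on hle (hDmDX (measurableSet_singleton 0)) hIΔ₀ hIΔY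
      (.of_forall fun ω (hω : D ω = 0) => by simp [hΔY, hω]), hPT, hm₀] with ω hloc hPT hm₀ hω
    have h0 := (hD ω).resolve_right hω
    rw [← hPT, hloc h0, hm₀ h0]
  have hgm : (fun ω => g (X ω)) =ᵐ[μ] fun ω => m₀ (X ω) := by
    have hID : Integrable D μ := by simpa using hDmul (integrable_const 1)
    have hdiff := ae_eq_zero_of_condExp_ne_one hmX.comap_le
      ((hmg.sub hmm₀).comp (comap_measurable X)).aestronglyMeasurable hID
      (hcontrol.mono fun ω h hω => sub_eq_zero.mpr (h hω))
      (hover2.mono fun ω hω => by linarith)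
    filter_upwards [hdiff] with ω h using sub_eq_zero.mp h
  have hkey : ∫ ω, D ω * (Y20 ω - Y10 ω - m₀ (X ω)) ∂μ = 0 :=
    integral_mul_sub_eq_zero_of_condExp_ae_eq hle hDmDX.aestronglyMeasurable hIΔ₀ (hDmul hIΔ₀)
      (hDmul hIntm) (hPT.trans hgm)
  congr 1
  rw [← add_zero (∫ ω, D ω * (Y21 ω - Y20 ω) ∂μ), ← hkey, ← integral_add ?_ ?_]
  · refine integral_congr_ae (.of_forall fun ω => ?_)
    rcases hD ω with h | h <;> simp [hY1, hY2, h]; ring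
  exacts [hDmul (hI21.sub hI20), hDmul (hIΔ₀.sub hIntm)]
end

section
/- Conditional Slutsky lemma: Let (Pₙ) be a sequence of random probability measures on ℝ² (measurable with respect to the data) with marginals Pₙᵁ, Pₙⱽ. If d_BL(Pₙᵁ, Pᵁ) → 0 in probability for a fixed probability measure Pᵁ on ℝ, and d_BL(Pₙⱽ, δ_c) → 0 in probability for a constant c, then d_BL(L(Uₙ + Vₙ | Pₙ), L(Uₙ + c | Pₙ)) → 0 and d_BL(L(Uₙ·Vₙ | Pₙ), L(c·Uₙ | Pₙ)) → 0 in probability, where (Uₙ,Vₙ) | Pₙ ∼ Pₙ. -/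
open MeasureTheory Filter

/-- The bounded Lipschitz distance between two (probability) measures on a
metric space: the supremum of `|∫ f dP − ∫ f dQ|` over functions `f` with
`sup|f| + Lip(f) ≤ 1`. -/
noncomputable def dBL {E : Type*} [MeasurableSpace E] [PseudoMetricSpace E]
    (P Q : Measure E) : ℝ :=
  sSup {r : ℝ | ∃ (f : E → ℝ) (a b : NNReal),
    (∀ x, |f x| ≤ a) ∧ LipschitzWith b f ∧ (a : ℝ) + (b : ℝ) ≤ 1 ∧
    r = |(∫ x, f x ∂P) - ∫ x, f x ∂Q|}

/-!
Every distance in the conclusion is between two laws carried by the same random pair, so it is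
bounded by the coupling estimate `d_BL(law φ, law ψ) ≤ 2 E[min(1, |φ − ψ|)]`. For the sum,
`|(U + V) − (U + c)| = |V − c|`, and `E[min(1, |V − c|)]` is itself at most `2 d_BL(Pⱽ, δ_c)`.
For the product, `|UV − cU| = |U| |V − c|`; on `|U| ≤ M + 1` this is handled as for the sum, and
the mass of `|U| > M` is controlled by a Lipschitz cutoff whose mean under `Pₙᵁ` is within
`2 d_BL(Pₙᵁ, Pᵁ)` of its mean under `Pᵁ`, which is small for large `M`. These deterministic
bounds turn into convergence in probability by a union bound.
-/

open scoped NNReal Topology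

section BoundedLipschitz

variable {E : Type*} [PseudoMetricSpace E]

lemma abs_sub_le_two_mul_min_one_dist {f : E → ℝ} {a b : ℝ≥0} (hfa : ∀ x, |f x| ≤ a)
    (hfb : LipschitzWith b f) (hab : (a : ℝ) + b ≤ 1) (x y : E) :
    |f x - f y| ≤ 2 * min 1 (dist x y) := by
  rcases le_total (dist x y) 1 with hxy | hxy
  · rw [min_eq_right hxy, ← Real.dist_eq]
    calc dist (f x) (f y) ≤ b * dist x y := hfb.dist_le_mul x y
      _ ≤ 2 * dist x y := by gcongr; linarith [a.2]
  · rw [min_eq_left hxy]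
    calc |f x - f y| ≤ |f x| + |f y| := abs_sub _ _
      _ ≤ 2 * 1 := by linarith [hfa x, hfa y, b.2]

variable [MeasurableSpace E] {P Q : Measure E}

lemma dBL_nonneg (P Q : Measure E) : 0 ≤ dBL P Q :=
  Real.sSup_nonneg (by rintro r ⟨f, a, b, -, -, -, rfl⟩; exact abs_nonneg _)

lemma dBL_le_of_forall {K : ℝ} (hK : 0 ≤ K)
    (h : ∀ (f : E → ℝ) (a b : ℝ≥0), (∀ x, |f x| ≤ a) → LipschitzWith b f → (a : ℝ) + b ≤ 1 →
      |(∫ x, f x ∂P) - ∫ x, f x ∂Q| ≤ K) :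
    dBL P Q ≤ K :=
  Real.sSup_le (by rintro r ⟨f, a, b, hfa, hfb, hab, rfl⟩; exact h f a b hfa hfb hab) hK

variable [IsFiniteMeasure P] [IsFiniteMeasure Q]

lemma abs_integral_sub_le_dBL {f : E → ℝ} {a b : ℝ≥0} (hfa : ∀ x, |f x| ≤ a)
    (hfb : LipschitzWith b f) (hab : (a : ℝ) + b ≤ 1) :
    |(∫ x, f x ∂P) - ∫ x, f x ∂Q| ≤ dBL P Q := by
  refine le_csSup ⟨P.real Set.univ + Q.real Set.univ, ?_⟩ ⟨f, a, b, hfa, hfb, hab, rfl⟩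
  rintro r ⟨g, a', b', hga, -, hab', rfl⟩
  have hg (μ : Measure E) [IsFiniteMeasure μ] : |∫ x, g x ∂μ| ≤ μ.real Set.univ :=
    calc |∫ x, g x ∂μ| ≤ a' * μ.real Set.univ := by
          simpa using norm_integral_le_of_norm_le_const (μ := μ) (f := g) (C := a')
            (ae_of_all _ fun x => by simpa using hga x)
      _ ≤ μ.real Set.univ := mul_le_of_le_one_left measureReal_nonneg (by linarith [b'.2])
  exact (abs_sub _ _).trans (add_le_add (hg P) (hg Q))

lemma abs_integral_sub_le_mul_dBL {f : E → ℝ} {a b : ℝ≥0} (hfa : ∀ x, |f x| ≤ a)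
    (hfb : LipschitzWith b f) :
    |(∫ x, f x ∂P) - ∫ x, f x ∂Q| ≤ (a + b) * dBL P Q := by
  rcases eq_or_ne (a + b) 0 with hab | hab
  · have hf (x : E) : f x = 0 := abs_nonpos_iff.1 <| by
      simpa [(add_eq_zero.1 hab).1] using hfa x
    simpa [hf] using mul_nonneg (by positivity) (dBL_nonneg P Q)
  have hpos : (0 : ℝ) < a + b := by exact_mod_cast pos_iff_ne_zero.2 hab
  set t := (a + b)⁻¹ with ht
  have hscaled := abs_integral_sub_le_dBL (P := P) (Q := Q) (f := fun x => t * f x)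
    (a := t * a) (b := t * b) (fun x => ?_) ?_ ?_
  · rw [integral_const_mul, integral_const_mul, ← mul_sub, abs_mul, NNReal.abs_eq,
      ht, NNReal.coe_inv, NNReal.coe_add] at hscaled
    exact (inv_mul_le_iff₀ hpos).1 hscaled
  · rw [NNReal.coe_mul, abs_mul, NNReal.abs_eq]
    exact mul_le_mul_of_nonneg_left (hfa x) t.2
  · have := (lipschitzWith_smul (t : ℝ)).comp hfb
    rwa [NNReal.nnnorm_eq] at this
  · rw [NNReal.coe_mul, NNReal.coe_mul, ← mul_add, ht, NNReal.coe_inv, NNReal.coe_add,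
      inv_mul_cancel₀ hpos.ne']

lemma integral_le_add_two_mul_dBL {g : E → ℝ} (hg : ∀ x, |g x| ≤ 1) (hlip : LipschitzWith 1 g) :
    ∫ x, g x ∂P ≤ (∫ x, g x ∂Q) + 2 * dBL P Q := by
  have := abs_integral_sub_le_mul_dBL (P := P) (Q := Q) (a := 1) hg hlip
  norm_num at this
  linarith [le_abs_self ((∫ x, g x ∂P) - ∫ x, g x ∂Q)]

end BoundedLipschitz

section Coupling

variable {E : Type*} [PseudoMetricSpace E] [MeasurableSpace E] [OpensMeasurableSpace E]

lemma integral_min_one_dist_le_two_mul_dBL_dirac (P : Measure E) [IsFiniteMeasure P] (c : E) :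
    ∫ x, min 1 (dist x c) ∂P ≤ 2 * dBL P (Measure.dirac c) := by
  have hlip : LipschitzWith 1 fun x => min 1 (dist x c) := (LipschitzWith.dist_left c).const_min 1
  have hle := integral_le_add_two_mul_dBL (P := P) (Q := Measure.dirac c)
    (fun x => by rw [abs_of_nonneg (by positivity)]; exact min_le_left _ _) hlip
  rwa [integral_dirac' _ _ hlip.continuous.stronglyMeasurable, dist_self, min_eq_right zero_le_one,
    zero_add] at hle

variable [SecondCountableTopology E]

lemma dBL_map_le_two_mul_integral {α : Type*} [MeasurableSpace α] (μ : Measure α)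
    [IsFiniteMeasure μ] {φ ψ : α → E} (hφ : Measurable φ) (hψ : Measurable ψ) :
    dBL (μ.map φ) (μ.map ψ) ≤ 2 * ∫ p, min 1 (dist (φ p) (ψ p)) ∂μ := by
  have hbound : Integrable (fun p => 2 * min 1 (dist (φ p) (ψ p))) μ :=
    Integrable.of_bound (by fun_prop) 2 (ae_of_all _ fun p => by
      rw [Real.norm_eq_abs, abs_of_nonneg (by positivity)]
      linarith [min_le_left 1 (dist (φ p) (ψ p))])
  refine dBL_le_of_forall (by positivity) fun f a b hfa hfb hab => ?_
  have hf := hfb.continuous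
  have hint {χ : α → E} (hχ : Measurable χ) : Integrable (fun p => f (χ p)) μ :=
    Integrable.of_bound (hf.measurable.comp hχ).aestronglyMeasurable a
      (ae_of_all _ fun p => hfa _)
  rw [integral_map hφ.aemeasurable hf.aestronglyMeasurable,
    integral_map hψ.aemeasurable hf.aestronglyMeasurable,
    ← integral_sub (hint hφ) (hint hψ), ← integral_const_mul]
  exact abs_integral_le_integral_abs.trans <| integral_mono ((hint hφ).sub (hint hψ)).abs hbound
    fun p => abs_sub_le_two_mul_min_one_dist hfa hfb hab _ _

end Coupling

lemma dBL_map_add_le {E : Type*} [SeminormedAddCommGroup E] [MeasurableSpace E] [BorelSpace E]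
    [SecondCountableTopology E] (μ : Measure (E × E)) [IsFiniteMeasure μ] (c : E) :
    dBL (μ.map fun p => p.1 + p.2) (μ.map fun p => p.1 + c) ≤
      4 * dBL (μ.map Prod.snd) (Measure.dirac c) := by
  calc dBL (μ.map fun p => p.1 + p.2) (μ.map fun p => p.1 + c)
      ≤ 2 * ∫ p, min 1 (dist (p.1 + p.2) (p.1 + c)) ∂μ :=
        dBL_map_le_two_mul_integral μ (by fun_prop) (by fun_prop)
    _ = 2 * ∫ v, min 1 (dist v c) ∂(μ.map Prod.snd) := by
        simp_rw [dist_add_left]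
        rw [integral_map measurable_snd.aemeasurable (by fun_prop)]
    _ ≤ 2 * (2 * dBL (μ.map Prod.snd) (Measure.dirac c)) := by
        gcongr
        exact integral_min_one_dist_le_two_mul_dBL_dirac _ c
    _ = 4 * dBL (μ.map Prod.snd) (Measure.dirac c) := by ring

noncomputable def tailCutoff (M u : ℝ) : ℝ := min 1 (max 0 (|u| - M))

lemma abs_tailCutoff_le_one (M u : ℝ) : |tailCutoff M u| ≤ 1 := by
  rw [abs_of_nonneg (le_min zero_le_one (le_max_left _ _))]
  exact min_le_left _ _

lemma lipschitzWith_tailCutoff (M : ℝ) : LipschitzWith 1 (tailCutoff M) := by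
  have h : LipschitzWith 1 fun u : ℝ => |u| - M := by
    simpa using (LipschitzWith.dist_left (0 : ℝ)).sub (LipschitzWith.const M)
  exact (h.const_max 0).const_min 1

lemma tendsto_integral_tailCutoff (μ : Measure ℝ) [IsFiniteMeasure μ] :
    Tendsto (fun M => ∫ u, tailCutoff M u ∂μ) atTop (𝓝 0) := by
  have hlim (u : ℝ) : Tendsto (fun M => tailCutoff M u) atTop (𝓝 0) :=
    tendsto_const_nhds.congr' <| (eventually_ge_atTop |u|).mono fun M hM => by
      simp [tailCutoff, sub_nonpos.2 hM]
  simpa using tendsto_integral_filter_of_dominated_convergence (fun _ => 1)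
    (.of_forall fun M => (lipschitzWith_tailCutoff M).continuous.aestronglyMeasurable)
    (.of_forall fun M => ae_of_all _ fun u => abs_tailCutoff_le_one M u)
    (integrable_const 1) (ae_of_all _ hlim)

lemma min_one_abs_mul_le_add_tailCutoff (M : ℝ) (hM : 0 ≤ M) {u d : ℝ} (hd : 0 ≤ d) :
    min 1 (|u| * d) ≤ (M + 1) * min 1 d + tailCutoff M u := by
  have htail : 0 ≤ tailCutoff M u := le_min zero_le_one (le_max_left _ _)
  rcases le_total |u| (M + 1) with hu | hu
  · rcases le_total d 1 with hd1 | hd1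
    · rw [min_eq_right hd1]
      nlinarith [min_le_right 1 (|u| * d)]
    · rw [min_eq_left hd1]
      linarith [min_le_left 1 (|u| * d)]
  · have : tailCutoff M u = 1 := by
      rw [tailCutoff, max_eq_right (by linarith), min_eq_left (by linarith)]
    nlinarith [min_le_left 1 (|u| * d), le_min zero_le_one hd]

lemma dBL_map_mul_le (μ : Measure (ℝ × ℝ)) [IsFiniteMeasure μ] (Q : Measure ℝ)
    [IsFiniteMeasure Q] (c : ℝ) {M : ℝ} (hM : 0 ≤ M) :
    dBL (μ.map fun p => p.1 * p.2) (μ.map fun p => c * p.1) ≤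
      4 * (M + 1) * dBL (μ.map Prod.snd) (Measure.dirac c) + 4 * dBL (μ.map Prod.fst) Q +
        2 * ∫ u, tailCutoff M u ∂Q := by
  have hsnd := integral_min_one_dist_le_two_mul_dBL_dirac (μ.map Prod.snd) c
  have hfst := integral_le_add_two_mul_dBL (P := μ.map Prod.fst) (Q := Q)
    (abs_tailCutoff_le_one M) (lipschitzWith_tailCutoff M)
  have hcont := (lipschitzWith_tailCutoff M).continuous
  have hintV : Integrable (fun p : ℝ × ℝ => (M + 1) * min 1 (dist p.2 c)) μ :=
    (Integrable.of_bound (by fun_prop) 1 (ae_of_all _ fun p => by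
      rw [Real.norm_eq_abs, abs_of_nonneg (by positivity)]; exact min_le_left _ _)).const_mul _
  have hintT : Integrable (fun p : ℝ × ℝ => tailCutoff M p.1) μ :=
    Integrable.of_bound (hcont.comp continuous_fst).aestronglyMeasurable 1
      (ae_of_all _ fun p => abs_tailCutoff_le_one M p.1)
  have hdist (p : ℝ × ℝ) : dist (p.1 * p.2) (c * p.1) = |p.1| * dist p.2 c := by
    rw [Real.dist_eq, Real.dist_eq, ← abs_mul]
    ring_nf
  calc dBL (μ.map fun p => p.1 * p.2) (μ.map fun p => c * p.1)
      ≤ 2 * ∫ p, min 1 (dist (p.1 * p.2) (c * p.1)) ∂μ :=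
        dBL_map_le_two_mul_integral μ (by fun_prop) (by fun_prop)
    _ ≤ 2 * ∫ p, ((M + 1) * min 1 (dist p.2 c) + tailCutoff M p.1) ∂μ := by
        gcongr 2 * ?_
        refine integral_mono (Integrable.of_bound (by fun_prop) 1 (ae_of_all _ fun p => ?_))
          (hintV.add hintT) fun p => hdist p ▸ min_one_abs_mul_le_add_tailCutoff M hM dist_nonneg
        rw [Real.norm_eq_abs, abs_of_nonneg (by positivity)]
        exact min_le_left _ _
    _ = 2 * ((M + 1) * ∫ v, min 1 (dist v c) ∂(μ.map Prod.snd) +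
          ∫ u, tailCutoff M u ∂(μ.map Prod.fst)) := by
        rw [integral_add hintV hintT, integral_const_mul,
          integral_map measurable_snd.aemeasurable (by fun_prop),
          integral_map measurable_fst.aemeasurable hcont.aestronglyMeasurable]
    _ ≤ _ := by
        have := mul_le_mul_of_nonneg_left hsnd (by linarith : (0 : ℝ) ≤ M + 1)
        linarith

lemma tendsto_measure_setOf_le_of_le_mul_add {ι Ω : Type*} [MeasurableSpace Ω] {μ : Measure Ω}
    {l : Filter ι} {X Y Z : ι → Ω → ℝ}
    (hX : ∀ ε : ℝ, 0 < ε → Tendsto (fun i => μ {ω | ε ≤ X i ω}) l (𝓝 0))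
    (hY : ∀ ε : ℝ, 0 < ε → Tendsto (fun i => μ {ω | ε ≤ Y i ω}) l (𝓝 0))
    (hZ : ∀ δ : ℝ, 0 < δ → ∃ K : ℝ, 0 < K ∧ ∀ i ω, Z i ω ≤ K * (X i ω + Y i ω) + δ) :
    ∀ ε : ℝ, 0 < ε → Tendsto (fun i => μ {ω | ε ≤ Z i ω}) l (𝓝 0) := by
  intro ε hε
  obtain ⟨K, hK, hZK⟩ := hZ (ε / 2) (half_pos hε)
  have hη : 0 < ε / (4 * K) := by positivity
  have hsub (i : ι) :
      {ω | ε ≤ Z i ω} ⊆ {ω | ε / (4 * K) ≤ X i ω} ∪ {ω | ε / (4 * K) ≤ Y i ω} := by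
    intro ω (hω : ε ≤ Z i ω)
    by_contra hnot
    obtain ⟨hXω, hYω⟩ : X i ω < ε / (4 * K) ∧ Y i ω < ε / (4 * K) := by
      simpa only [Set.mem_union, Set.mem_ofPred_eq, not_or, not_le] using hnot
    have : K * (X i ω + Y i ω) < ε / 2 :=
      calc K * (X i ω + Y i ω) < K * (ε / (4 * K) + ε / (4 * K)) := by gcongr
        _ = ε / 2 := by field_simp; ring
    linarith [hZK i ω]
  refine tendsto_of_tendsto_of_tendsto_of_le_of_le tendsto_const_nhds
    (by simpa using (hX _ hη).add (hY _ hη)) (fun _ => zero_le)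
    fun i => (measure_mono (hsub i)).trans (measure_union_le _ _)

theorem conditional_slutsky_general
    {Ω : Type*} [MeasurableSpace Ω] (P₀ : Measure Ω)
    (Pn : ℕ → Ω → Measure (ℝ × ℝ))
    (hPn : ∀ n ω, IsProbabilityMeasure (Pn n ω))
    (PU : Measure ℝ) [IsProbabilityMeasure PU] (c : ℝ)
    (hU : ∀ ε : ℝ, 0 < ε → Tendsto (fun n =>
      P₀ {ω | ε ≤ dBL ((Pn n ω).map Prod.fst) PU}) atTop (nhds 0))
    (hV : ∀ ε : ℝ, 0 < ε → Tendsto (fun n =>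
      P₀ {ω | ε ≤ dBL ((Pn n ω).map Prod.snd) (Measure.dirac c)}) atTop (nhds 0)) :
    (∀ ε : ℝ, 0 < ε → Tendsto (fun n =>
      P₀ {ω | ε ≤ dBL ((Pn n ω).map (fun p => p.1 + p.2))
        ((Pn n ω).map (fun p => p.1 + c))}) atTop (nhds 0)) ∧
    (∀ ε : ℝ, 0 < ε → Tendsto (fun n =>
      P₀ {ω | ε ≤ dBL ((Pn n ω).map (fun p => p.1 * p.2))
        ((Pn n ω).map (fun p => c * p.1))}) atTop (nhds 0)) := by
  refine ⟨tendsto_measure_setOf_le_of_le_mul_add hU hV fun δ hδ => ⟨4, four_pos, fun n ω => ?_⟩,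
    tendsto_measure_setOf_le_of_le_mul_add hU hV fun δ hδ => ?_⟩
  · have := dBL_map_add_le (Pn n ω) c
    linarith [dBL_nonneg ((Pn n ω).map Prod.fst) PU]
  · obtain ⟨M, hM, hMδ⟩ := ((eventually_ge_atTop 0).and
      ((tendsto_integral_tailCutoff PU).eventually_lt_const (half_pos hδ))).exists
    refine ⟨4 * (M + 1), by positivity, fun n ω => ?_⟩
    have := dBL_map_mul_le (Pn n ω) PU c hM
    nlinarith [mul_nonneg hM (dBL_nonneg ((Pn n ω).map Prod.fst) PU)]

/-- Conditional Slutsky lemma: if the conditional law of `Uₙ` converges in the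
bounded Lipschitz distance to a fixed law `Pᵁ` in probability, and the
conditional law of `Vₙ` converges to the Dirac mass at `c` in probability, then
conditionally `Uₙ + Vₙ` behaves like `Uₙ + c` and `Uₙ·Vₙ` like `c·Uₙ`. -/
theorem conditional_slutsky
    {Ω : Type*} [MeasurableSpace Ω] (P₀ : Measure Ω) [IsProbabilityMeasure P₀]
    (Pn : ℕ → Ω → Measure (ℝ × ℝ))
    (hPn : ∀ n ω, IsProbabilityMeasure (Pn n ω))
    (PU : Measure ℝ) [IsProbabilityMeasure PU] (c : ℝ)
    (hU : ∀ ε : ℝ, 0 < ε → Tendsto (fun n =>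
      P₀ {ω | ε ≤ dBL ((Pn n ω).map Prod.fst) PU}) atTop (nhds 0))
    (hV : ∀ ε : ℝ, 0 < ε → Tendsto (fun n =>
      P₀ {ω | ε ≤ dBL ((Pn n ω).map Prod.snd) (Measure.dirac c)}) atTop (nhds 0)) :
    (∀ ε : ℝ, 0 < ε → Tendsto (fun n =>
      P₀ {ω | ε ≤ dBL ((Pn n ω).map (fun p => p.1 + p.2))
        ((Pn n ω).map (fun p => p.1 + c))}) atTop (nhds 0)) ∧
    (∀ ε : ℝ, 0 < ε → Tendsto (fun n =>
      P₀ {ω | ε ≤ dBL ((Pn n ω).map (fun p => p.1 * p.2))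
        ((Pn n ω).map (fun p => c * p.1))}) atTop (nhds 0)) :=
  conditional_slutsky_general P₀ Pn hPn PU c hU hV
end
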